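/- Let d ≥ 2. There exists a constant C > 0 (depending only on d) such that for all t > 0 and all x ∈ ℝ^d₊: ∫_{ℝ^d₊} |∇_x (∇_x + ∇_y) H(x,y,t)| dy ≤ C t^{−1} e^{−x_d²/(8t)}. -/

import Mathlib

open MeasureTheory Real Set

/-- One-dimensional Gaussian heat kernel `G_t(ξ) = (4πt)^{−1/2} e^{−ξ²/(4t)}`. -/
noncomputable def G1 (t ξ : ℝ) : ℝ := (4 * π * t) ^ (-(1 : ℝ) / 2) * Real.exp (-ξ ^ 2 / (4 * t))

/-- `(d−1)`-dimensional Gaussian heat kernel (here `d = n+2`, so `d−1 = n+1`):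
`G_t^{(d−1)}(v) = (4πt)^{−(d−1)/2} e^{−|v|²/(4t)}`. -/
noncomputable def Gtan (n : ℕ) (t : ℝ) (v : Fin (n + 1) → ℝ) : ℝ :=
  (4 * π * t) ^ (-((n : ℝ) + 1) / 2) * Real.exp (-(∑ i, (v i) ^ 2) / (4 * t))

/-- Half-space Dirichlet heat kernel in dimension `d = n+2`:
`H(x,y,t) = G_t^{(d−1)}(x'−y') (G_t(x_d−y_d) − G_t(x_d+y_d))`. -/
noncomputable def H (n : ℕ) (t : ℝ) (x y : Fin (n + 2) → ℝ) : ℝ :=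
  Gtan n t (fun i => x i.castSucc - y i.castSucc) *
    (G1 t (x (Fin.last (n + 1)) - y (Fin.last (n + 1))) -
      G1 t (x (Fin.last (n + 1)) + y (Fin.last (n + 1))))

/-- Component `i` of the vector `(∇_x + ∇_y) H(x,y,t)`. -/
noncomputable def D1 (n : ℕ) (t : ℝ) (i : Fin (n + 2)) (x y : Fin (n + 2) → ℝ) : ℝ :=
  deriv (fun s => H n t (Function.update x i s) y) (x i) +
    deriv (fun s => H n t x (Function.update y i s)) (y i)

/-- Entry `(k,i)` of the matrix `∇_x (∇_x + ∇_y) H(x,y,t)`, i.e. `∂_{x_k}(∂_{x_i}+∂_{y_i})H`. -/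
noncomputable def D2 (n : ℕ) (t : ℝ) (k i : Fin (n + 2)) (x y : Fin (n + 2) → ℝ) : ℝ :=
  deriv (fun s => D1 n t i (Function.update x k s) y) (x k)

/-!
The operator `∂_{x_i} + ∂_{y_i}` annihilates every function of `x_i - y_i`. Hence it kills `H` for
tangential `i`, and for `i = d` it only sees the reflected factor `-G_t(x_d + y_d)`, giving
`(x_d + y_d)/t · G_t(x_d + y_d) G_t^{(d-1)}(x' - y')`. So the only nonzero entries of the matrix
are in its last column, and each is a polynomial weight times `G_t(x_d + y_d) G_t^{(d-1)}(x' - y')`.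
Half of the Gaussian absorbs the weight (`|u| e^{-u²/8t} ≤ √(8t)`, `u² e^{-u²/8t} ≤ 8t`), and
`(x_d + y_d)² ≥ x_d² + y_d²` splits off `e^{-x_d²/8t}`; what remains is a Gaussian in `y` of
variance `4t`, whose integral cancels the normalisation `(4πt)^{-d/2}` up to `2^{d/2}`.
-/

open Function

section GaussianBounds

variable {c : ℝ}

theorem sq_mul_exp_neg_sq_div_le (hc : 0 < c) (u : ℝ) : u ^ 2 * exp (-u ^ 2 / c) ≤ c := by
  have h := add_one_le_exp (u ^ 2 / c)
  rw [neg_div, exp_neg, ← div_eq_mul_inv, div_le_iff₀ (exp_pos _)]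
  calc u ^ 2 = c * (u ^ 2 / c) := by field_simp
    _ ≤ c * exp (u ^ 2 / c) := by gcongr; linarith

theorem abs_mul_exp_neg_sq_div_le (hc : 0 < c) (u : ℝ) : |u| * exp (-u ^ 2 / c) ≤ √c := by
  have hle : exp (-u ^ 2 / c) ≤ 1 :=
    exp_le_one_iff.mpr (div_nonpos_of_nonpos_of_nonneg (neg_nonpos.mpr (sq_nonneg u)) hc.le)
  rw [le_sqrt (by positivity) hc.le, mul_pow, sq_abs]
  calc u ^ 2 * exp (-u ^ 2 / c) ^ 2 ≤ u ^ 2 * exp (-u ^ 2 / c) := by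
        gcongr u ^ 2 * ?_
        exact pow_le_of_le_one (exp_pos _).le hle two_ne_zero
    _ ≤ c := sq_mul_exp_neg_sq_div_le hc u

theorem exp_neg_add_sq_le (hc : 0 < c) (S : ℝ) {a b : ℝ} (ha : 0 ≤ a) (hb : 0 ≤ b) :
    exp (-(S + (a + b) ^ 2) / c) ≤ exp (-a ^ 2 / c) * exp (-(S + b ^ 2) / c) := by
  rw [← exp_add, exp_le_exp, ← add_div]
  gcongr
  nlinarith [mul_nonneg ha hb]

end GaussianBounds

section GaussianIntegrals

variable {ι : Type*} [Fintype ι] {c : ℝ}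

theorem exp_neg_sq_sub_div (c u w : ℝ) :
    exp (-(u - w) ^ 2 / c) = exp (-(1 / c) * (u - w) ^ 2) := by
  ring_nf

theorem integrable_exp_neg_sq_sub_div (hc : 0 < c) (w : ℝ) :
    Integrable fun u : ℝ => exp (-(u - w) ^ 2 / c) := by
  simp only [exp_neg_sq_sub_div]
  exact (integrable_exp_neg_mul_sq (by positivity)).comp_sub_right w

theorem integral_exp_neg_sq_sub_div (c w : ℝ) :
    ∫ u : ℝ, exp (-(u - w) ^ 2 / c) = √(π * c) := by
  simp only [exp_neg_sq_sub_div]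
  rw [integral_sub_right_eq_self (fun u => exp (-(1 / c) * u ^ 2)), integral_gaussian,
    div_div_eq_mul_div, div_one]

theorem exp_neg_sum_sq_sub_div (c : ℝ) (y w : ι → ℝ) :
    exp (-(∑ j, (y j - w j) ^ 2) / c) = ∏ j, exp (-(y j - w j) ^ 2 / c) := by
  rw [← exp_sum, ← Finset.sum_neg_distrib, Finset.sum_div]

theorem integrable_exp_neg_sum_sq_sub_div (hc : 0 < c) (w : ι → ℝ) :
    Integrable fun y : ι → ℝ => exp (-(∑ j, (y j - w j) ^ 2) / c) := by
  simp only [exp_neg_sum_sq_sub_div]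
  exact Integrable.fintype_prod (f := fun j u => exp (-(u - w j) ^ 2 / c))
    fun j => integrable_exp_neg_sq_sub_div hc (w j)

theorem integral_exp_neg_sum_sq_sub_div (c : ℝ) (w : ι → ℝ) :
    ∫ y : ι → ℝ, exp (-(∑ j, (y j - w j) ^ 2) / c) = √(π * c) ^ Fintype.card ι := by
  simp only [exp_neg_sum_sq_sub_div]
  rw [volume_pi, integral_fintype_prod_eq_prod (fun j u => exp (-(u - w j) ^ 2 / c))]
  simp only [integral_exp_neg_sq_sub_div, Finset.prod_const, Finset.card_univ]

end GaussianIntegrals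

theorem sqrt_sum_sum_sq_le {ι : Type*} [Fintype ι] {a : ι → ι → ℝ} {M : ℝ} (hM : 0 ≤ M)
    (h : ∀ k i, |a k i| ≤ M) : √(∑ k, ∑ i, a k i ^ 2) ≤ Fintype.card ι * M := by
  have hsq : ∑ k, ∑ i, a k i ^ 2 ≤ (Fintype.card ι * M) ^ 2 :=
    calc ∑ k, ∑ i, a k i ^ 2 ≤ ∑ _k : ι, ∑ _i : ι, M ^ 2 :=
          Finset.sum_le_sum fun k _ => Finset.sum_le_sum fun i _ =>
            sq_le_sq' (abs_le.mp (h k i)).1 (abs_le.mp (h k i)).2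
      _ = (Fintype.card ι * M) ^ 2 := by
          simp only [Finset.sum_const, Finset.card_univ, nsmul_eq_mul]
          ring
  calc √(∑ k, ∑ i, a k i ^ 2) ≤ √((Fintype.card ι * M) ^ 2) := sqrt_le_sqrt hsq
    _ = Fintype.card ι * M := sqrt_sq (by positivity)

theorem sum_sq_update {m : ℕ} (v : Fin m → ℝ) (j : Fin m) (u : ℝ) :
    ∑ i, update v j u i ^ 2 = u ^ 2 + (∑ i, v i ^ 2 - v j ^ 2) := by
  rw [← Finset.add_sum_erase _ _ (Finset.mem_univ j),
    ← Finset.add_sum_erase _ _ (Finset.mem_univ j), update_self,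
    Finset.sum_congr rfl fun i hi => by rw [update_of_ne (Finset.ne_of_mem_erase hi)]]
  ring

theorem update_last_castSucc {α : Type*} {n : ℕ} (x : Fin (n + 1) → α) (s : α) (i : Fin n) :
    update x (Fin.last n) s i.castSucc = x i.castSucc :=
  update_of_ne (Fin.castSucc_ne_last i) s x

section Kernel

theorem hasDerivAt_G1 (t ξ : ℝ) : HasDerivAt (G1 t) (-ξ / (2 * t) * G1 t ξ) ξ := by
  refine ((((hasDerivAt_pow 2 ξ).neg.div_const (4 * t)).exp).const_mul
    ((4 * π * t) ^ (-(1 : ℝ) / 2))).congr_deriv ?_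
  simp only [G1, Pi.neg_apply]
  ring

theorem hasDerivAt_div_mul_G1 (t ξ : ℝ) :
    HasDerivAt (fun ξ => ξ / t * G1 t ξ) ((1 / t - ξ ^ 2 / (2 * t ^ 2)) * G1 t ξ) ξ := by
  refine (((hasDerivAt_id ξ).div_const t).mul (hasDerivAt_G1 t ξ)).congr_deriv ?_
  simp only [id]
  ring

theorem hasDerivAt_Gtan_update (n : ℕ) (t : ℝ) (v : Fin (n + 1) → ℝ) (j : Fin (n + 1))
    (u : ℝ) :
    HasDerivAt (fun u => Gtan n t (update v j u)) (-u / (2 * t) * Gtan n t (update v j u)) u := by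
  simp only [Gtan, sum_sq_update]
  refine (((((hasDerivAt_pow 2 u).add_const _).neg.div_const (4 * t)).exp).const_mul
    ((4 * π * t) ^ (-((n : ℝ) + 1) / 2))).congr_deriv ?_
  simp only [Pi.neg_apply]
  ring

variable {n : ℕ} {t : ℝ}

theorem G1_mul_Gtan (ht : 0 < t) (ξ : ℝ) (v : Fin (n + 1) → ℝ) :
    G1 t ξ * Gtan n t v =
      (4 * π * t) ^ (-((n : ℝ) + 2) / 2) * exp (-(∑ i, v i ^ 2 + ξ ^ 2) / (4 * t)) := by
  have h : (4 * π * t) ^ (-((n : ℝ) + 2) / 2) =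
      (4 * π * t) ^ (-(1 : ℝ) / 2) * (4 * π * t) ^ (-((n : ℝ) + 1) / 2) := by
    rw [← rpow_add (by positivity)]
    ring_nf
  rw [G1, Gtan, h, mul_mul_mul_comm, ← exp_add]
  ring_nf

theorem abs_mul_G1_mul_Gtan_le (ht : 0 < t) (v : Fin (n + 1) → ℝ) {a b p M : ℝ}
    (ha : 0 ≤ a) (hb : 0 ≤ b) (hp : |p| * exp (-(∑ i, v i ^ 2 + (a + b) ^ 2) / (8 * t)) ≤ M) :
    |p * (G1 t (a + b) * Gtan n t v)| ≤
      M * (4 * π * t) ^ (-((n : ℝ) + 2) / 2) * exp (-a ^ 2 / (8 * t)) *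
        exp (-(∑ i, v i ^ 2 + b ^ 2) / (8 * t)) := by
  set E := exp (-(∑ i, v i ^ 2 + (a + b) ^ 2) / (8 * t))
  have hM : 0 ≤ M := le_trans (by positivity) hp
  have hE : exp (-(∑ i, v i ^ 2 + (a + b) ^ 2) / (4 * t)) = E * E := by
    rw [← exp_add]
    ring_nf
  rw [G1_mul_Gtan ht, hE, abs_mul, abs_of_pos (a := _ * (E * E)) (by positivity)]
  calc |p| * ((4 * π * t) ^ (-((n : ℝ) + 2) / 2) * (E * E))
      = |p| * E * (4 * π * t) ^ (-((n : ℝ) + 2) / 2) * E := by ring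
    _ ≤ M * (4 * π * t) ^ (-((n : ℝ) + 2) / 2) * E := by gcongr
    _ ≤ _ := (mul_le_mul_of_nonneg_left (exp_neg_add_sq_le (by positivity) _ ha hb)
        (by positivity)).trans_eq (by ring)

theorem tangential_weight_le (ht : 0 < t) (v : Fin (n + 1) → ℝ) (m : Fin (n + 1)) (ξ : ℝ) :
    |-ξ * v m / (2 * t ^ 2)| * exp (-(∑ i, v i ^ 2 + ξ ^ 2) / (8 * t)) ≤ 4 / t := by
  have h8t : 0 < 8 * t := by positivity
  have hsplit : exp (-(∑ i, v i ^ 2 + ξ ^ 2) / (8 * t)) ≤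
      exp (-v m ^ 2 / (8 * t)) * exp (-ξ ^ 2 / (8 * t)) := by
    rw [← exp_add, exp_le_exp, ← add_div]
    gcongr
    linarith [Finset.single_le_sum (fun i _ => sq_nonneg (v i)) (Finset.mem_univ m)]
  calc |-ξ * v m / (2 * t ^ 2)| * exp (-(∑ i, v i ^ 2 + ξ ^ 2) / (8 * t))
      ≤ |ξ| * |v m| / (2 * t ^ 2) * (exp (-v m ^ 2 / (8 * t)) * exp (-ξ ^ 2 / (8 * t))) := by
        rw [abs_div, abs_mul, abs_neg, abs_of_pos (by positivity : 0 < 2 * t ^ 2)]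
        gcongr
    _ = (|v m| * exp (-v m ^ 2 / (8 * t))) * (|ξ| * exp (-ξ ^ 2 / (8 * t))) / (2 * t ^ 2) := by
        ring
    _ ≤ √(8 * t) * √(8 * t) / (2 * t ^ 2) := by
        gcongr <;> exact abs_mul_exp_neg_sq_div_le h8t _
    _ = 4 / t := by
        rw [mul_self_sqrt h8t.le]
        field_simp
        ring

theorem normal_weight_le (ht : 0 < t) {S : ℝ} (hS : 0 ≤ S) (ξ : ℝ) :
    |1 / t - ξ ^ 2 / (2 * t ^ 2)| * exp (-(S + ξ ^ 2) / (8 * t)) ≤ 4 / t := by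
  have h8t : 0 < 8 * t := by positivity
  set e := exp (-(S + ξ ^ 2) / (8 * t))
  have he : 0 < e := exp_pos _
  have he1 : e ≤ 1 := exp_le_one_iff.mpr (div_nonpos_of_nonpos_of_nonneg (by nlinarith) h8t.le)
  have hq : ξ ^ 2 / (2 * t ^ 2) * e ≤ 4 / t := by
    have : ξ ^ 2 * e ≤ 8 * t :=
      le_trans (by gcongr; exact exp_le_exp.mpr (by gcongr; linarith))
        (sq_mul_exp_neg_sq_div_le h8t ξ)
    calc ξ ^ 2 / (2 * t ^ 2) * e = ξ ^ 2 * e / (2 * t ^ 2) := by ring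
      _ ≤ 8 * t / (2 * t ^ 2) := by gcongr
      _ = 4 / t := by field_simp; ring
  have h1 : 1 / t * e ≤ 4 / t :=
    calc 1 / t * e ≤ 1 / t := mul_le_of_le_one_right (by positivity) he1
      _ ≤ 4 / t := by gcongr; norm_num
  have h1' : 0 ≤ 1 / t * e := by positivity
  have hq' : 0 ≤ ξ ^ 2 / (2 * t ^ 2) * e := by positivity
  rw [← abs_of_pos he, ← abs_mul, abs_le, sub_mul]
  constructor <;> linarith

theorem rpow_mul_sqrt_pow (ht : 0 < t) :
    (4 * π * t) ^ (-((n : ℝ) + 2) / 2) * √(π * (8 * t)) ^ (n + 2) = √2 ^ (n + 2) := by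
  have hP : 0 < 4 * π * t := by positivity
  have h : √(4 * π * t) ^ (n + 2) = (4 * π * t) ^ (((n : ℝ) + 2) / 2) := by
    rw [sqrt_eq_rpow, ← rpow_natCast, ← rpow_mul hP.le]
    push_cast
    ring_nf
  rw [show π * (8 * t) = 2 * (4 * π * t) by ring, sqrt_mul zero_le_two, mul_pow, h,
    mul_left_comm, ← rpow_add hP, neg_div, neg_add_cancel, rpow_zero, mul_one]

end Kernel

section Hessian

variable {n : ℕ} {t : ℝ}

theorem tangential_update_left (x y : Fin (n + 2) → ℝ) (j : Fin (n + 1)) (s : ℝ) :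
    (fun i : Fin (n + 1) => update x j.castSucc s i.castSucc - y i.castSucc) =
      update (fun i => x i.castSucc - y i.castSucc) j (s - y j.castSucc) := by
  ext i
  by_cases h : i = j <;> simp [h]

theorem tangential_update_right (x y : Fin (n + 2) → ℝ) (j : Fin (n + 1)) (s : ℝ) :
    (fun i : Fin (n + 1) => x i.castSucc - update y j.castSucc s i.castSucc) =
      update (fun i => x i.castSucc - y i.castSucc) j (x j.castSucc - s) := by
  ext i
  by_cases h : i = j <;> simp [h]

theorem D1_castSucc (j : Fin (n + 1)) (x y : Fin (n + 2) → ℝ) : D1 n t j.castSucc x y = 0 := by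
  set v : Fin (n + 1) → ℝ := fun i => x i.castSucc - y i.castSucc
  set f : ℝ → ℝ := fun u =>
    Gtan n t (update v j u) * (G1 t (x (Fin.last (n + 1)) - y (Fin.last (n + 1))) -
      G1 t (x (Fin.last (n + 1)) + y (Fin.last (n + 1))))
  have hne : Fin.last (n + 1) ≠ j.castSucc := (Fin.castSucc_lt_last j).ne'
  have hx : (fun s => H n t (update x j.castSucc s) y) = fun s => f (s - y j.castSucc) := by
    ext s
    rw [H, tangential_update_left, update_of_ne hne]
  have hy : (fun s => H n t x (update y j.castSucc s)) = fun s => f (x j.castSucc - s) := by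
    ext s
    rw [H, tangential_update_right, update_of_ne hne]
  rw [D1, hx, hy, deriv_comp_sub_const, deriv_comp_const_sub, add_neg_cancel]

theorem D1_last (x y : Fin (n + 2) → ℝ) :
    D1 n t (Fin.last (n + 1)) x y =
      (x (Fin.last (n + 1)) + y (Fin.last (n + 1))) / t *
        G1 t (x (Fin.last (n + 1)) + y (Fin.last (n + 1))) *
        Gtan n t (fun i => x i.castSucc - y i.castSucc) := by
  set a := x (Fin.last (n + 1))
  set b := y (Fin.last (n + 1))
  set g := Gtan n t (fun i => x i.castSucc - y i.castSucc)
  have hx : (fun s => H n t (update x (Fin.last (n + 1)) s) y) =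
      fun s => g * (G1 t (s - b) - G1 t (s + b)) := by
    ext s
    simp only [H, update_last_castSucc, update_self]
    rfl
  have hy : (fun s => H n t x (update y (Fin.last (n + 1)) s)) =
      fun s => g * (G1 t (a - s) - G1 t (a + s)) := by
    ext s
    simp only [H, update_last_castSucc, update_self]
    rfl
  have dx : HasDerivAt (fun s => G1 t (s - b) - G1 t (s + b))
      (-(a - b) / (2 * t) * G1 t (a - b) - -(a + b) / (2 * t) * G1 t (a + b)) a :=
    ((hasDerivAt_G1 t (a - b)).comp_sub_const a b).sub
      ((hasDerivAt_G1 t (a + b)).comp_add_const a b)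
  have dy : HasDerivAt (fun s => G1 t (a - s) - G1 t (a + s))
      (-(-(a - b) / (2 * t) * G1 t (a - b)) - -(a + b) / (2 * t) * G1 t (a + b)) b :=
    ((hasDerivAt_G1 t (a - b)).comp_const_sub a b).sub
      ((hasDerivAt_G1 t (a + b)).comp_const_add a b)
  rw [D1, hx, hy, deriv_const_mul_field, deriv_const_mul_field, dx.deriv, dy.deriv]
  ring

theorem D2_castSucc (k : Fin (n + 2)) (j : Fin (n + 1)) (x y : Fin (n + 2) → ℝ) :
    D2 n t k j.castSucc x y = 0 := by
  simp only [D2, D1_castSucc, deriv_const]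

theorem D2_castSucc_last (m : Fin (n + 1)) (x y : Fin (n + 2) → ℝ) :
    D2 n t m.castSucc (Fin.last (n + 1)) x y =
      -(x (Fin.last (n + 1)) + y (Fin.last (n + 1))) * (x m.castSucc - y m.castSucc) / (2 * t ^ 2) *
        (G1 t (x (Fin.last (n + 1)) + y (Fin.last (n + 1))) *
          Gtan n t (fun i => x i.castSucc - y i.castSucc)) := by
  set ξ := x (Fin.last (n + 1)) + y (Fin.last (n + 1))
  set v : Fin (n + 1) → ℝ := fun i => x i.castSucc - y i.castSucc
  have hne : Fin.last (n + 1) ≠ m.castSucc := (Fin.castSucc_lt_last m).ne'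
  have h : (fun s => D1 n t (Fin.last (n + 1)) (update x m.castSucc s) y) =
      fun s => ξ / t * G1 t ξ * (fun u => Gtan n t (update v m u)) (s - y m.castSucc) := by
    ext s
    rw [D1_last, tangential_update_left, update_of_ne hne]
  rw [D2, h, deriv_const_mul_field, deriv_comp_sub_const (fun u => Gtan n t (update v m u)),
    (hasDerivAt_Gtan_update n t v m _).deriv, update_eq_self]
  ring

theorem D2_last_last (x y : Fin (n + 2) → ℝ) :
    D2 n t (Fin.last (n + 1)) (Fin.last (n + 1)) x y =
      (1 / t - (x (Fin.last (n + 1)) + y (Fin.last (n + 1))) ^ 2 / (2 * t ^ 2)) *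
        (G1 t (x (Fin.last (n + 1)) + y (Fin.last (n + 1))) *
          Gtan n t (fun i => x i.castSucc - y i.castSucc)) := by
  have h : (fun s => D1 n t (Fin.last (n + 1)) (update x (Fin.last (n + 1)) s) y) =
      fun s => (fun ξ => ξ / t * G1 t ξ) (s + y (Fin.last (n + 1))) *
        Gtan n t (fun i => x i.castSucc - y i.castSucc) := by
    ext s
    simp only [D1_last, update_last_castSucc, update_self]
  rw [D2, h, deriv_mul_const_field, deriv_comp_add_const (fun ξ => ξ / t * G1 t ξ),
    (hasDerivAt_div_mul_G1 t _).deriv]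
  ring

theorem abs_D2_le (ht : 0 < t) {x y : Fin (n + 2) → ℝ} (hx : 0 ≤ x (Fin.last (n + 1)))
    (hy : 0 ≤ y (Fin.last (n + 1))) (k i : Fin (n + 2)) :
    |D2 n t k i x y| ≤
      4 / t * (4 * π * t) ^ (-((n : ℝ) + 2) / 2) * exp (-x (Fin.last (n + 1)) ^ 2 / (8 * t)) *
        exp (-(∑ j : Fin (n + 1), (x j.castSucc - y j.castSucc) ^ 2 + y (Fin.last (n + 1)) ^ 2) /
          (8 * t)) := by
  cases i using Fin.lastCases with
  | cast j =>
    rw [D2_castSucc, abs_zero]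
    positivity
  | last =>
    cases k using Fin.lastCases with
    | cast m =>
      rw [D2_castSucc_last]
      exact abs_mul_G1_mul_Gtan_le ht _ hx hy
        (tangential_weight_le ht (fun j => x j.castSucc - y j.castSucc) m _)
    | last =>
      rw [D2_last_last]
      exact abs_mul_G1_mul_Gtan_le ht _ hx hy
        (normal_weight_le ht (Finset.sum_nonneg fun j _ => sq_nonneg _) _)

theorem sum_sq_sub_update_last (x y : Fin (n + 2) → ℝ) :
    ∑ j, (y j - update x (Fin.last (n + 1)) 0 j) ^ 2 =
      ∑ j : Fin (n + 1), (x j.castSucc - y j.castSucc) ^ 2 + y (Fin.last (n + 1)) ^ 2 := by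
  rw [Fin.sum_univ_castSucc]
  simp only [update_last_castSucc, update_self, sub_zero, sub_sq_comm (y _)]

end Hessian

/-- For `d = n+2 ≥ 2` there is `C > 0` (depending only on `d`) such that for all
`t > 0` and all `x` in the half space:
`∫_{ℝ^d₊} |∇_x(∇_x+∇_y)H(x,y,t)| dy ≤ C t⁻¹ e^{−x_d²/(8t)}`. -/
theorem stmt_8 (n : ℕ) :
    ∃ C : ℝ, 0 < C ∧ ∀ t : ℝ, 0 < t → ∀ x : Fin (n + 2) → ℝ,
      0 < x (Fin.last (n + 1)) →
      (∫ y in {y : Fin (n + 2) → ℝ | 0 < y (Fin.last (n + 1))},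
          Real.sqrt (∑ k, ∑ i, (D2 n t k i x y) ^ 2)) ≤
        C * t⁻¹ * Real.exp (-(x (Fin.last (n + 1))) ^ 2 / (8 * t)) := by
  refine ⟨4 * (n + 2) * √2 ^ (n + 2), by positivity, fun t ht x hx => ?_⟩
  set half := {y : Fin (n + 2) → ℝ | 0 < y (Fin.last (n + 1))}
  have hhalf : MeasurableSet half := measurableSet_lt measurable_const (measurable_pi_apply _)
  set A := (n + 2) * (4 / t * (4 * π * t) ^ (-((n : ℝ) + 2) / 2) *
    exp (-x (Fin.last (n + 1)) ^ 2 / (8 * t)))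
  set Φ := fun y : Fin (n + 2) → ℝ =>
    exp (-(∑ j, (y j - update x (Fin.last (n + 1)) 0 j) ^ 2) / (8 * t))
  have hΦ : Integrable fun y => A * Φ y :=
    (integrable_exp_neg_sum_sq_sub_div (by positivity) _).const_mul A
  have hbound : ∀ y ∈ half, √(∑ k, ∑ i, D2 n t k i x y ^ 2) ≤ A * Φ y := fun y hy => by
    have := sqrt_sum_sum_sq_le (by positivity) (abs_D2_le ht hx.le hy.le)
    simpa [A, Φ, sum_sq_sub_update_last, mul_assoc] using this
  calc (∫ y in half, √(∑ k, ∑ i, D2 n t k i x y ^ 2))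
      ≤ ∫ y in half, A * Φ y :=
        integral_mono_of_nonneg (ae_of_all _ fun _ => sqrt_nonneg _) hΦ.integrableOn
          (ae_restrict_of_forall_mem hhalf hbound)
    _ ≤ ∫ y, A * Φ y := setIntegral_le_integral hΦ (ae_of_all _ fun _ => by positivity)
    _ = A * √(π * (8 * t)) ^ (n + 2) := by
        rw [integral_const_mul, integral_exp_neg_sum_sq_sub_div, Fintype.card_fin]
    _ = 4 * (n + 2) * √2 ^ (n + 2) * t⁻¹ * exp (-x (Fin.last (n + 1)) ^ 2 / (8 * t)) := by
        rw [← rpow_mul_sqrt_pow ht]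
        ring
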